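/- Let ξ_m = mδ with δ > 0 for m = 1,…,N and V = λδ with λ > 0. The BCS gap equation 1 = (V/2) Σ_{m=1}^N 1/√(ξ_m² + Δ²) has a solution Δ > 0 if and only if λ H_N > 2, where H_N = Σ_{m=1}^N 1/m is the N-th harmonic number; moreover when it exists the solution Δ(N) is strictly increasing in N. -/

import Mathlib

open Real

private lemma stmt15_sqrt_pos (δ : ℝ) (hδ : 0 < δ) (m : ℕ) (hm : 1 ≤ m) (Δ : ℝ) :
    0 < Real.sqrt (((m : ℝ) * δ) ^ 2 + Δ ^ 2) := by
  have h1 : (1 : ℝ) ≤ (m : ℝ) := by exact_mod_cast hm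
  have hmδ : 0 < (m : ℝ) * δ := mul_pos (by linarith) hδ
  apply Real.sqrt_pos.2
  nlinarith [sq_nonneg Δ]

private lemma stmt15_sqrt_gt (δ : ℝ) (hδ : 0 < δ) (m : ℕ) (hm : 1 ≤ m) (Δ : ℝ)
    (hΔ : Δ ≠ 0) : (m : ℝ) * δ < Real.sqrt (((m : ℝ) * δ) ^ 2 + Δ ^ 2) := by
  have h1 : (1 : ℝ) ≤ (m : ℝ) := by exact_mod_cast hm
  have hmδ : 0 < (m : ℝ) * δ := by nlinarith
  have hΔ2 : 0 < Δ ^ 2 := by positivity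
  rw [show ((m:ℝ)*δ) < Real.sqrt (((m:ℝ)*δ)^2 + Δ^2) ↔
      ((m:ℝ)*δ)^2 < ((m:ℝ)*δ)^2 + Δ^2 from Real.lt_sqrt hmδ.le]
  linarith

/-- For the equally spaced spectrum `ξ_m = mδ` and coupling `V = λδ`, the gap
equation `1 = (V/2) Σ_{m=1}^N 1/√(ξ_m²+Δ²)` has a solution `Δ > 0` iff
`λ H_N > 2` (`H_N` the N-th harmonic number); moreover the solution is strictly
increasing in `N`. -/
theorem stmt15 (δ lam : ℝ) (hδ : 0 < δ) (hlam : 0 < lam)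
    (G : ℕ → ℝ → ℝ)
    (hG : G = fun (N : ℕ) (Δ : ℝ) =>
      (lam * δ / 2) * ∑ m ∈ Finset.Icc 1 N, 1 / Real.sqrt (((m : ℝ) * δ) ^ 2 + Δ ^ 2)) :
    (∀ N : ℕ, (∃ Δ : ℝ, 0 < Δ ∧ G N Δ = 1) ↔
        2 < lam * ∑ m ∈ Finset.Icc 1 N, (1 : ℝ) / m) ∧
    (∀ N₁ N₂ : ℕ, N₁ < N₂ → ∀ Δ₁ Δ₂ : ℝ, 0 < Δ₁ → 0 < Δ₂ →
        G N₁ Δ₁ = 1 → G N₂ Δ₂ = 1 → Δ₁ < Δ₂) := by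
  subst hG
  -- strict upper bound on G when Δ ≠ 0 and N ≥ 1
  have hbound : ∀ N : ℕ, 1 ≤ N → ∀ Δ : ℝ, Δ ≠ 0 →
      (lam * δ / 2) * ∑ m ∈ Finset.Icc 1 N, 1 / Real.sqrt (((m : ℝ) * δ) ^ 2 + Δ ^ 2)
        < (lam / 2) * ∑ m ∈ Finset.Icc 1 N, (1 : ℝ) / m := by
    intro N hN Δ hΔ
    have hsum : ∑ m ∈ Finset.Icc 1 N, (lam * δ / 2) * (1 / Real.sqrt (((m : ℝ) * δ) ^ 2 + Δ ^ 2))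
        < ∑ m ∈ Finset.Icc 1 N, (lam / 2) * ((1 : ℝ) / m) := by
      apply Finset.sum_lt_sum_of_nonempty
      · exact ⟨1, Finset.mem_Icc.2 ⟨le_refl 1, hN⟩⟩
      · intro m hm
        obtain ⟨hm1, _⟩ := Finset.mem_Icc.1 hm
        have h1 : (1 : ℝ) ≤ (m : ℝ) := by exact_mod_cast hm1
        have hmδ : 0 < (m : ℝ) * δ := by nlinarith
        have hs := stmt15_sqrt_pos δ hδ m hm1 Δ
        have hlt := stmt15_sqrt_gt δ hδ m hm1 Δ hΔ
        have key : 1 / Real.sqrt (((m : ℝ) * δ) ^ 2 + Δ ^ 2) < 1 / ((m : ℝ) * δ) :=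
          one_div_lt_one_div_of_lt hmδ hlt
        have : (lam / 2) * ((1:ℝ)/m) = (lam * δ / 2) * (1 / ((m:ℝ)*δ)) := by
          field_simp
        rw [this]
        have hc : 0 < lam * δ / 2 := by positivity
        exact (mul_lt_mul_iff_right₀ hc).2 key
    rw [Finset.mul_sum, Finset.mul_sum]
    exact hsum
  -- value at Δ = 0
  have hzero : ∀ N : ℕ,
      (lam * δ / 2) * ∑ m ∈ Finset.Icc 1 N, 1 / Real.sqrt (((m : ℝ) * δ) ^ 2 + (0:ℝ) ^ 2)
        = (lam / 2) * ∑ m ∈ Finset.Icc 1 N, (1 : ℝ) / m := by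
    intro N
    rw [Finset.mul_sum, Finset.mul_sum]
    apply Finset.sum_congr rfl
    intro m hm
    obtain ⟨hm1, _⟩ := Finset.mem_Icc.1 hm
    have h1 : (1 : ℝ) ≤ (m : ℝ) := by exact_mod_cast hm1
    have hmδ : 0 < (m : ℝ) * δ := by nlinarith
    rw [show ((0:ℝ))^2 = 0 by ring, add_zero, Real.sqrt_sq hmδ.le]
    field_simp
  -- continuity in Δ
  have hcont : ∀ N : ℕ, Continuous (fun Δ : ℝ =>
      (lam * δ / 2) * ∑ m ∈ Finset.Icc 1 N, 1 / Real.sqrt (((m : ℝ) * δ) ^ 2 + Δ ^ 2)) := by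
    intro N
    apply Continuous.mul continuous_const
    apply continuous_finset_sum
    intro m hm
    obtain ⟨hm1, _⟩ := Finset.mem_Icc.1 hm
    apply Continuous.div continuous_const
    · exact Real.continuous_sqrt.comp (by continuity)
    · intro Δ
      exact (stmt15_sqrt_pos δ hδ m hm1 Δ).ne'
  -- antitone in Δ (weak, for positive Δ)
  have hanti : ∀ N : ℕ, ∀ Δ₁ Δ₂ : ℝ, 0 < Δ₁ → Δ₁ ≤ Δ₂ →
      (lam * δ / 2) * ∑ m ∈ Finset.Icc 1 N, 1 / Real.sqrt (((m : ℝ) * δ) ^ 2 + Δ₂ ^ 2)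
        ≤ (lam * δ / 2) * ∑ m ∈ Finset.Icc 1 N, 1 / Real.sqrt (((m : ℝ) * δ) ^ 2 + Δ₁ ^ 2) := by
    intro N Δ₁ Δ₂ h1 h12
    apply mul_le_mul_of_nonneg_left _ (by positivity)
    apply Finset.sum_le_sum
    intro m hm
    obtain ⟨hm1, _⟩ := Finset.mem_Icc.1 hm
    have hs1 := stmt15_sqrt_pos δ hδ m hm1 Δ₁
    apply one_div_le_one_div_of_le hs1
    apply Real.sqrt_le_sqrt
    nlinarith
  -- strictly increasing in N at fixed Δ
  have hmonoN : ∀ N₁ N₂ : ℕ, N₁ < N₂ → ∀ Δ : ℝ,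
      (lam * δ / 2) * ∑ m ∈ Finset.Icc 1 N₁, 1 / Real.sqrt (((m : ℝ) * δ) ^ 2 + Δ ^ 2)
        < (lam * δ / 2) * ∑ m ∈ Finset.Icc 1 N₂, 1 / Real.sqrt (((m : ℝ) * δ) ^ 2 + Δ ^ 2) := by
    intro N₁ N₂ h12 Δ
    apply (mul_lt_mul_iff_right₀ (by positivity)).2
    apply Finset.sum_lt_sum_of_subset
      (Finset.Icc_subset_Icc le_rfl h12.le) (i := N₂)
    · exact Finset.mem_Icc.2 ⟨Nat.one_le_iff_ne_zero.2 (by omega), le_rfl⟩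
    · simp only [Finset.mem_Icc]; omega
    · have : 1 ≤ N₂ := by omega
      exact one_div_pos.2 (stmt15_sqrt_pos δ hδ N₂ this Δ)
    · intro j hj _
      obtain ⟨hj1, _⟩ := Finset.mem_Icc.1 hj
      exact le_of_lt (one_div_pos.2 (stmt15_sqrt_pos δ hδ j hj1 Δ))
  constructor
  · intro N
    constructor
    · rintro ⟨Δ, hΔ, hGΔ⟩
      rcases Nat.eq_zero_or_pos N with hN0 | hN1
      · exfalso; rw [hN0] at hGΔ; simp at hGΔ
      have hGΔ' : (lam * δ / 2) * ∑ m ∈ Finset.Icc 1 N, 1 / Real.sqrt (((m : ℝ) * δ) ^ 2 + Δ ^ 2) = 1 := hGΔ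
      have := hbound N hN1 Δ hΔ.ne'
      rw [hGΔ'] at this
      nlinarith
    · intro h
      have hN1 : 1 ≤ N := by
        by_contra hc
        have : N = 0 := by omega
        rw [this] at h
        simp at h
        nlinarith
      set f := fun Δ : ℝ =>
        (lam * δ / 2) * ∑ m ∈ Finset.Icc 1 N, 1 / Real.sqrt (((m : ℝ) * δ) ^ 2 + Δ ^ 2) with hf
      have hf0 : 1 < f 0 := by
        rw [hf]; simp only; rw [hzero N]; nlinarith
      -- big Δ
      set B : ℝ := lam * δ * N with hB
      have hNpos : (0:ℝ) < N := by exact_mod_cast hN1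
      have hBpos : 0 < B := by positivity
      have hfB : f B < 1 := by
        have hsum : ∑ m ∈ Finset.Icc 1 N, 1 / Real.sqrt (((m : ℝ) * δ) ^ 2 + B ^ 2)
            ≤ (N : ℝ) * (1 / B) := by
          have := Finset.sum_le_card_nsmul (Finset.Icc 1 N)
            (fun m => 1 / Real.sqrt (((m : ℝ) * δ) ^ 2 + B ^ 2)) (1 / B) ?_
          · simpa [Nat.card_Icc, nsmul_eq_mul] using this
          · intro m hm
            obtain ⟨hm1, _⟩ := Finset.mem_Icc.1 hm
            apply one_div_le_one_div_of_le hBpos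
            rw [show B ≤ Real.sqrt (((m:ℝ)*δ)^2 + B^2) ↔ B^2 ≤ ((m:ℝ)*δ)^2 + B^2
              from Real.le_sqrt hBpos.le (by positivity)]
            nlinarith [sq_nonneg ((m:ℝ)*δ)]
        have h2 : f B ≤ (lam * δ / 2) * ((N:ℝ) * (1/B)) := by
          apply mul_le_mul_of_nonneg_left hsum (by positivity)
        have h3 : (lam * δ / 2) * ((N:ℝ) * (1/B)) = 1/2 := by
          rw [hB]; field_simp
        rw [h3] at h2
        linarith
      have hc : ContinuousOn f (Set.Icc 0 B) := (hcont N).continuousOn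
      have := intermediate_value_Icc' hBpos.le hc
      have h1mem : (1:ℝ) ∈ Set.Icc (f B) (f 0) := ⟨hfB.le, hf0.le⟩
      obtain ⟨Δ, hΔmem, hfΔ⟩ := this h1mem
      refine ⟨Δ, ?_, hfΔ⟩
      rcases eq_or_lt_of_le hΔmem.1 with heq | hlt
      · exfalso; rw [← heq] at hfΔ; rw [hfΔ] at hf0; exact lt_irrefl _ hf0
      · exact hlt
  · intro N₁ N₂ h12 Δ₁ Δ₂ hΔ₁ hΔ₂ hg1 hg2
    by_contra hc
    push_neg at hc
    have key : (lam * δ / 2) * ∑ m ∈ Finset.Icc 1 N₂, 1 / Real.sqrt (((m : ℝ) * δ) ^ 2 + Δ₁ ^ 2)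
        ≤ 1 := by
      have hg2' : (lam * δ / 2) * ∑ m ∈ Finset.Icc 1 N₂, 1 / Real.sqrt (((m : ℝ) * δ) ^ 2 + Δ₂ ^ 2) = 1 := hg2
      calc (lam * δ / 2) * ∑ m ∈ Finset.Icc 1 N₂, 1 / Real.sqrt (((m : ℝ) * δ) ^ 2 + Δ₁ ^ 2)
          ≤ (lam * δ / 2) * ∑ m ∈ Finset.Icc 1 N₂, 1 / Real.sqrt (((m : ℝ) * δ) ^ 2 + Δ₂ ^ 2) :=
            hanti N₂ Δ₂ Δ₁ hΔ₂ hc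
        _ = 1 := hg2'
    have hg1' : (lam * δ / 2) * ∑ m ∈ Finset.Icc 1 N₁, 1 / Real.sqrt (((m : ℝ) * δ) ^ 2 + Δ₁ ^ 2) = 1 := hg1
    have := hmonoN N₁ N₂ h12 Δ₁
    rw [hg1'] at this
    linarith
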